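/- arXiv:2208.10763 — 2 statements merged into one kernel-verified Lean document; each statement's English description precedes it below -/
import Mathlib

section
/- Let 0 < θ ≤ 1/4, k > 0 and c ∈ ℝ, and set r = k / sin(2θ). Then the hyperbolic distance in the upper half-plane between the two points c − √(r² − k²) + k·i and c + √(r² − k²) + k·i is at least log(1/θ). (That is, an excursion of a geodesic into the depth-k horoball that reaches the depth k/sin(2θ) — equivalently, that enters with angle at most 2θ to the normal — has hyperbolic length at least ln(1/θ).) -/
open UpperHalfPlane

/-!
Both endpoints lie at height `k`, `2√(r² - k²)` apart, so `cosh d = 2 (r / k)² - 1 = 2 / sin² (2θ) - 1`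
for their distance `d`. As `sin (2θ) ≤ 2θ`, this is at least `1 / (2θ²) - 1`, which is `≥ 1 / θ`
once `θ ≤ 1/4`; and `e^d ≥ cosh d`.
-/

namespace Real

lemma cosh_le_exp_of_nonneg {x : ℝ} (hx : 0 ≤ x) : cosh x ≤ exp x := by
  rw [← cosh_add_sinh]
  exact le_add_of_nonneg_right (sinh_nonneg_iff.mpr hx)

lemma one_div_le_two_div_sin_two_mul_sq_sub_one {θ : ℝ} (hθ₀ : 0 < θ) (hθ₁ : θ ≤ 1 / 4) :
    1 / θ ≤ 2 / sin (2 * θ) ^ 2 - 1 := by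
  have hsin_pos : 0 < sin (2 * θ) :=
    sin_pos_of_pos_of_lt_pi (by linarith) (by linarith [pi_gt_three])
  calc 1 / θ ≤ 2 / (2 * θ) ^ 2 - 1 := by
        rw [div_sub_one (by positivity), div_le_div_iff₀ hθ₀ (by positivity)]
        nlinarith
    _ ≤ 2 / sin (2 * θ) ^ 2 - 1 := by
        gcongr
        exact sin_le (by linarith)

end Real

namespace UpperHalfPlane

lemma cosh_dist_of_im_eq {z w : ℍ} (h : z.im = w.im) :
    Real.cosh (dist z w) = 1 + (z.re - w.re) ^ 2 / (2 * z.im ^ 2) := by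
  rw [cosh_dist', ← h]
  field_simp [z.im_ne_zero]
  ring

lemma cosh_dist_excursion_endpoints {c k r : ℝ} (hkr : k ^ 2 ≤ r ^ 2) {z₁ z₂ : ℍ}
    (hz₁ : (z₁ : ℂ) = c - √(r ^ 2 - k ^ 2) + k * Complex.I)
    (hz₂ : (z₂ : ℂ) = c + √(r ^ 2 - k ^ 2) + k * Complex.I) :
    Real.cosh (dist z₁ z₂) = 2 * (r / k) ^ 2 - 1 := by
  have hre₁ : z₁.re = c - √(r ^ 2 - k ^ 2) := by simpa using congrArg Complex.re hz₁
  have hre₂ : z₂.re = c + √(r ^ 2 - k ^ 2) := by simpa using congrArg Complex.re hz₂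
  have him₁ : z₁.im = k := by simpa using congrArg Complex.im hz₁
  have him₂ : z₂.im = k := by simpa using congrArg Complex.im hz₂
  have hk : k ≠ 0 := him₁ ▸ z₁.im_ne_zero
  rw [cosh_dist_of_im_eq (him₁.trans him₂.symm), hre₁, hre₂, him₁]
  field_simp
  nlinarith [Real.sq_sqrt (sub_nonneg.mpr hkr)]

end UpperHalfPlane

/-- For `0 < θ ≤ 1/4`, `k > 0` and `r = k / sin (2θ)`, the hyperbolic distance between the
two endpoints `c ± √(r² - k²) + k i` of the excursion of the semicircle `C(c,r)` above the
line `{Im z = k}` is at least `log (1/θ)`. -/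
theorem length_excursion_ge (θ k c : ℝ) (hθ₀ : 0 < θ) (hθ₁ : θ ≤ 1 / 4) (hk : 0 < k)
    (r : ℝ) (hr : r = k / Real.sin (2 * θ))
    (z₁ z₂ : UpperHalfPlane)
    (hz₁ : (z₁ : ℂ) = (c : ℂ) - (Real.sqrt (r ^ 2 - k ^ 2) : ℂ) + (k : ℂ) * Complex.I)
    (hz₂ : (z₂ : ℂ) = (c : ℂ) + (Real.sqrt (r ^ 2 - k ^ 2) : ℂ) + (k : ℂ) * Complex.I) :
    Real.log (1 / θ) ≤ dist z₁ z₂ := by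
  have hsin : 0 < Real.sin (2 * θ) :=
    Real.sin_pos_of_pos_of_lt_pi (by linarith) (by linarith [Real.pi_gt_three])
  have hkr : k ^ 2 ≤ r ^ 2 := by
    rw [hr, div_pow, le_div_iff₀ (by positivity)]
    nlinarith [Real.sin_sq_le_one (2 * θ), sq_nonneg k]
  rw [Real.log_le_iff_le_exp (by positivity)]
  calc 1 / θ ≤ 2 / Real.sin (2 * θ) ^ 2 - 1 :=
        Real.one_div_le_two_div_sin_two_mul_sq_sub_one hθ₀ hθ₁
    _ = Real.cosh (dist z₁ z₂) := by
        rw [cosh_dist_excursion_endpoints hkr hz₁ hz₂, hr]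
        field_simp
    _ ≤ Real.exp (dist z₁ z₂) := Real.cosh_le_exp_of_nonneg dist_nonneg
end

section
/- Let k > 0 be real, r ≥ k, c ∈ ℝ, and set ℓ = 2·arcosh(r/k) (the hyperbolic length of the excursion of the semicircle C(c,r) above the line {Im z = k}, so that r = k·cosh(ℓ/2)). Then the number N of nonzero integers n such that C(c,r) ∩ C(c+n,r) ≠ ∅ satisfies k·e^{ℓ/2} − 2 ≤ N ≤ 4k·e^{ℓ/2}. -/
/-!
Two translates `C(c, r)` and `C(c + n, r)` meet (above the midpoint of their centres) exactly when
`|n| < 2r`, so `N = 2⌈2r⌉ - 2` lies in `[4r - 2, 4r)`. On the other side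
`k e^{ℓ/2} = r + √(r² - k²)` lies in `[r, 2r]`, and the two bounds follow.
-/

/-- The Euclidean semicircle of center `c ∈ ℝ` and radius `r` in the upper half-plane. -/
def semicircle (c r : ℝ) : Set ℂ :=
  {z : ℂ | 0 < z.im ∧ ‖z - (c : ℂ)‖ = r}

/-- The inverse hyperbolic cosine on `[1, ∞)`. -/
noncomputable def arcosh (x : ℝ) : ℝ := Real.log (x + Real.sqrt (x ^ 2 - 1))

theorem mem_semicircle_iff {c r : ℝ} {z : ℂ} :
    z ∈ semicircle c r ↔ 0 < z.im ∧ 0 ≤ r ∧ (z.re - c) ^ 2 + z.im ^ 2 = r ^ 2 := by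
  have hsq : ‖z - c‖ ^ 2 = (z.re - c) ^ 2 + z.im ^ 2 := by
    rw [Complex.sq_norm, Complex.normSq_apply]
    simp only [Complex.sub_re, Complex.sub_im, Complex.ofReal_re, Complex.ofReal_im, sub_zero]
    ring
  refine and_congr_right fun _ => ⟨fun h => ⟨h ▸ norm_nonneg _, hsq ▸ h ▸ rfl⟩, ?_⟩
  rintro ⟨hr, h⟩
  rwa [← hsq, sq_eq_sq₀ (norm_nonneg _) hr] at h

theorem semicircle_inter_translate_nonempty_iff {c r d : ℝ} (hd : d ≠ 0) :
    (semicircle c r ∩ semicircle (c + d) r).Nonempty ↔ |d| < 2 * r := by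
  constructor
  · rintro ⟨z, hz, hz'⟩
    obtain ⟨him, hr, h⟩ := mem_semicircle_iff.mp hz
    obtain ⟨-, -, h'⟩ := mem_semicircle_iff.mp hz'
    have hre : 2 * (z.re - c) = d :=
      (mul_left_cancel₀ hd (by linear_combination h' - h)).symm
    refine abs_lt_of_sq_lt_sq ?_ (by linarith)
    nlinarith
  · intro h
    have hr : 0 ≤ r := by linarith [abs_nonneg d]
    have hpos : 0 < r ^ 2 - (d / 2) ^ 2 := by
      obtain ⟨h1, h2⟩ := abs_lt.mp h
      nlinarith
    have hy : 0 < Real.sqrt (r ^ 2 - (d / 2) ^ 2) := Real.sqrt_pos.mpr hpos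
    refine ⟨⟨c + d / 2, Real.sqrt (r ^ 2 - (d / 2) ^ 2)⟩, ?_, ?_⟩ <;>
      refine mem_semicircle_iff.mpr ⟨hy, hr, ?_⟩ <;>
      · simp only [Real.sq_sqrt hpos.le]
        ring

theorem ncard_nonzero_int_abs_lt {a : ℝ} (ha : 0 < a) :
    ({n : ℤ | n ≠ 0 ∧ |(n : ℝ)| < a}.ncard : ℤ) = 2 * ⌈a⌉ - 2 := by
  have hset : {n : ℤ | n ≠ 0 ∧ |(n : ℝ)| < a} = ↑((Finset.Ioo (-⌈a⌉) ⌈a⌉).erase 0) := by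
    ext n
    simp only [Set.mem_ofPred_eq, Finset.coe_erase, Set.mem_sdiff, Finset.coe_Ioo, Set.mem_Ioo,
      Set.mem_singleton_iff, abs_lt, neg_lt, Int.lt_ceil, Int.cast_neg]
    tauto
  have hceil : 0 < ⌈a⌉ := Int.ceil_pos.mpr ha
  rw [hset, Set.ncard_coe_finset, Finset.card_erase_of_mem (by simpa using hceil), Int.card_Ioo]
  omega

theorem le_exp_arcosh_le_two_mul {x : ℝ} (hx : 1 ≤ x) :
    x ≤ Real.exp (arcosh x) ∧ Real.exp (arcosh x) ≤ 2 * x := by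
  have hsqrt : Real.sqrt (x ^ 2 - 1) ≤ x :=
    (Real.sqrt_le_left (by linarith)).mpr (by linarith)
  rw [show arcosh x = Real.arcosh x from rfl, Real.exp_arcosh hx]
  constructor <;> linarith [Real.sqrt_nonneg (x ^ 2 - 1)]

/-- An excursion into the depth-`k` horoball of hyperbolic length `ℓ = 2 arcosh (r/k)`
(i.e. along a semicircle of radius `r = k cosh (ℓ/2)`) has between `k e^{ℓ/2} - 2` and
`4 k e^{ℓ/2}` self-intersections in the cyclic cover: the number `N` of nonzero integers
`n` with `C(c,r) ∩ C(c+n,r) ≠ ∅` satisfies `k e^{ℓ/2} - 2 ≤ N ≤ 4 k e^{ℓ/2}`. -/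
theorem excursion_self_intersections_bounds (k r c : ℝ) (hk : 0 < k) (hkr : k ≤ r)
    (ℓ : ℝ) (hℓ : ℓ = 2 * arcosh (r / k))
    (N : ℕ) (hN : N = {n : ℤ | n ≠ 0 ∧ (semicircle c r ∩ semicircle (c + n) r).Nonempty}.ncard) :
    k * Real.exp (ℓ / 2) - 2 ≤ (N : ℝ) ∧ (N : ℝ) ≤ 4 * k * Real.exp (ℓ / 2) := by
  have hr : 0 < r := hk.trans_le hkr
  have hset : {n : ℤ | n ≠ 0 ∧ (semicircle c r ∩ semicircle (c + n) r).Nonempty} =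
      {n : ℤ | n ≠ 0 ∧ |(n : ℝ)| < 2 * r} :=
    Set.ext fun n => and_congr_right fun hn =>
      semicircle_inter_translate_nonempty_iff (Int.cast_ne_zero.mpr hn)
  have hcard : (N : ℝ) = 2 * ⌈2 * r⌉ - 2 := by
    rw [hN, hset]
    exact_mod_cast ncard_nonzero_int_abs_lt (by linarith)
  obtain ⟨hexp_ge, hexp_le⟩ := le_exp_arcosh_le_two_mul ((one_le_div hk).mpr hkr)
  rw [div_le_iff₀' hk] at hexp_ge
  rw [mul_div_assoc', le_div_iff₀' hk] at hexp_le
  rw [hℓ, mul_div_cancel_left₀ _ two_ne_zero, hcard]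
  constructor <;> linarith [Int.le_ceil (2 * r), Int.ceil_lt_add_one (2 * r)]
end
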